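/- Let K be a field of characteristic zero and n ≥ 1, d ≥ 0. The rows of the multiplicity matrix M(Δ_{n,d}, Δ_{n,d−1}) — i.e., the linear functionals on the space of weightings of the complete d-complex Δ_{n,d} given by w ↦ ∑_{σ∈Δ_{n,d}} w(σ)·m(τ⊆σ) for each (d−1)-simplex τ — are linearly independent. Consequently, the K-vector space of balancings of the complete d-complex Δ_{n,d} on n vertices has dimension C(n+d−1, d+1). -/

import Mathlib

open scoped BigOperators

/-- The multiplicity `m(T ⊆ σ) = ∏ i, C(σ i, T i)` of a multiset `T` in a multiset `σ`
on `{1, …, n}` (multisets encoded as functions `Fin n → ℕ`). -/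
def mult {n : ℕ} (T σ : Fin n → ℕ) : ℕ := ∏ i, (σ i).choose (T i)

/-- The complete `d`-complex `Δ_{n,d}` on `n` vertices: all multisets of cardinality
`d + 1` on `{1,…,n}` (their multiplicities are automatically `< d + 2`). -/
def completeComplex (n d : ℕ) : Finset (Fin n → ℕ) :=
  (Fintype.piFinset fun _ : Fin n => Finset.range (d + 2)).filter
    (fun σ => ∑ i, σ i = d + 1)

/-- The `K`-vector space of balancings of the complete `d`-complex `Δ_{n,d}`:
weightings supported on `Δ_{n,d}` satisfying the balancing condition for every
multiset `T` of cardinality `≤ d`. -/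
noncomputable def balancingSpace (K : Type*) [Field K] (n d : ℕ) :
    Submodule K ((Fin n → ℕ) → K) :=
  (⨅ σ : {σ : Fin n → ℕ // σ ∉ completeComplex n d},
      LinearMap.ker (LinearMap.proj σ.1 : ((Fin n → ℕ) → K) →ₗ[K] K)) ⊓
  (⨅ T : {T : Fin n → ℕ // ∑ i, T i ≤ d},
      LinearMap.ker (∑ σ ∈ completeComplex n d, (mult T.1 σ : K) •
        (LinearMap.proj σ : ((Fin n → ℕ) → K) →ₗ[K] K)))

/-! The multiplicity matrix is triangular: among the rows with a nonzero coefficient in a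
vanishing combination, the row `T` with the largest multiplicity of a fixed vertex `v` is the only
one meeting the column `T + v`, where its entry `T v + 1` is nonzero in characteristic zero.
Moreover `∑ᵢ (Tᵢ + 1) m(T + i ⊆ σ) = (|σ| - |T|) m(T ⊆ σ)`, so by downward induction every row
indexed by a smaller multiset is a combination of rows of cardinality `d`. Hence the balancings are
the kernel of `M(Δ_{n,d}, Δ_{n,d-1})`, of dimension `C(n+d, d+1) - C(n+d-1, d) = C(n+d-1, d+1)`. -/

open Finset Function

section Multiplicity

variable {n : ℕ}

lemma mult_ne_zero_iff {T σ : Fin n → ℕ} : mult T σ ≠ 0 ↔ T ≤ σ := by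
  simp [mult, prod_ne_zero_iff, Nat.choose_eq_zero_iff, Pi.le_def]

lemma mult_update (T σ : Fin n → ℕ) (i : Fin n) (v : ℕ) :
    mult (update T i v) σ = (σ i).choose v * ∏ k ∈ univ \ {i}, (σ k).choose (T k) := by
  rw [mult, ← prod_update_of_mem (mem_univ i)]
  exact prod_congr rfl fun k _ => apply_update (fun k x => (σ k).choose x) T i v k

lemma succ_mul_mult_update_succ (T σ : Fin n → ℕ) (i : Fin n) :
    (T i + 1) * mult (update T i (T i + 1)) σ = (σ i - T i) * mult T σ := by
  have h := mult_update T σ i (T i)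
  rw [update_eq_self] at h
  rw [h, mult_update, ← mul_assoc, ← mul_assoc, mul_comm (T i + 1),
    Nat.choose_succ_right_eq, mul_comm (σ i - T i)]

lemma sum_succ_mul_mult_update_succ (T σ : Fin n → ℕ) :
    ∑ i, (T i + 1) * mult (update T i (T i + 1)) σ = (∑ i, σ i - ∑ i, T i) * mult T σ := by
  simp_rw [succ_mul_mult_update_succ, ← sum_mul]
  by_cases hT : T ≤ σ
  · rw [sum_tsub_distrib _ fun i _ => hT i]
  · rw [not_ne_iff.mp (mt mult_ne_zero_iff.mp hT), mul_zero, mul_zero]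

lemma sum_update_succ (T : Fin n → ℕ) (i : Fin n) :
    ∑ k, update T i (T i + 1) k = ∑ k, T k + 1 := by
  rw [sum_update_of_mem (mem_univ i), ← add_sum_erase _ _ (mem_univ i), sdiff_singleton_eq_erase]
  ring

lemma eq_of_le_update_succ {T S : Fin n → ℕ} {i : Fin n}
    (hle : T ≤ update S i (S i + 1)) (hi : T i ≤ S i) (hsum : ∑ k, T k = ∑ k, S k) : T = S := by
  have hTS : T ≤ S := fun k => by
    rcases eq_or_ne k i with rfl | hk
    · exact hi
    · simpa [update_of_ne hk] using hle k
  exact funext fun k => (sum_eq_sum_iff_of_le fun k _ => hTS k).mp hsum k (mem_univ k)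

end Multiplicity

section Rows

variable {K : Type*} [Field K] {n : ℕ}

lemma sum_cast_succ_mul_sum_mult_update_succ (s : Finset (Fin n → ℕ)) {k : ℕ}
    (hs : ∀ σ ∈ s, ∑ i, σ i = k) (u : (Fin n → ℕ) → K) (T : Fin n → ℕ) :
    ∑ i, ((T i + 1 : ℕ) : K) * ∑ σ ∈ s, (mult (update T i (T i + 1)) σ : K) * u σ
      = ((k - ∑ i, T i : ℕ) : K) * ∑ σ ∈ s, (mult T σ : K) * u σ := by
  simp_rw [mul_sum]
  rw [sum_comm]
  refine sum_congr rfl fun σ hσ => ?_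
  calc ∑ i, ((T i + 1 : ℕ) : K) * ((mult (update T i (T i + 1)) σ : K) * u σ)
      = ((∑ i, (T i + 1) * mult (update T i (T i + 1)) σ : ℕ) : K) * u σ := by
        push_cast [sum_mul, mul_assoc]; rfl
    _ = ((k - ∑ i, T i : ℕ) : K) * ((mult T σ : K) * u σ) := by
        rw [sum_succ_mul_mult_update_succ, hs σ hσ, Nat.cast_mul, mul_assoc]

theorem sum_mult_mul_eq_zero_of_card_le [CharZero K] (s : Finset (Fin n → ℕ)) {j k : ℕ}
    (hs : ∀ σ ∈ s, ∑ i, σ i = k) (hjk : j ≤ k) (u : (Fin n → ℕ) → K)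
    (h : ∀ T : Fin n → ℕ, ∑ i, T i = j → ∑ σ ∈ s, (mult T σ : K) * u σ = 0)
    (T : Fin n → ℕ) (hT : ∑ i, T i ≤ j) : ∑ σ ∈ s, (mult T σ : K) * u σ = 0 := by
  obtain ⟨e, he⟩ := Nat.exists_eq_add_of_le hT
  induction e generalizing T with
  | zero => exact h T he.symm
  | succ e ih =>
    have hup (i : Fin n) : ∑ σ ∈ s, (mult (update T i (T i + 1)) σ : K) * u σ = 0 :=
      ih _ (by rw [sum_update_succ]; omega) (by rw [sum_update_succ]; omega)
    have hk : ((k - ∑ i, T i : ℕ) : K) ≠ 0 := Nat.cast_ne_zero.mpr (by omega)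
    have key := sum_cast_succ_mul_sum_mult_update_succ s hs u T
    simp only [hup, mul_zero, sum_const_zero] at key
    exact (mul_eq_zero.mp key.symm).resolve_left hk

end Rows

noncomputable instance (n k : ℕ) : Fintype {σ : Fin n → ℕ // ∑ i, σ i = k} :=
  Fintype.ofEquiv _ (Sym.equivNatSumOfFintype (Fin n) k)

lemma card_subtype_sum_eq (n k : ℕ) :
    Fintype.card {σ : Fin n → ℕ // ∑ i, σ i = k} = (n + k - 1).choose k := by
  rw [← Fintype.card_congr (Sym.equivNatSumOfFintype (Fin n) k), Sym.card_sym_eq_choose,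
    Fintype.card_fin]

lemma mem_completeComplex {n d : ℕ} {σ : Fin n → ℕ} :
    σ ∈ completeComplex n d ↔ ∑ i, σ i = d + 1 := by
  simp only [completeComplex, mem_filter, Fintype.mem_piFinset, mem_range, and_iff_right_iff_imp]
  intro hσ i
  have := single_le_sum (fun j _ => Nat.zero_le (σ j)) (mem_univ i)
  omega

def multMatrix (K : Type*) [Field K] (n j k : ℕ) :
    Matrix {T : Fin n → ℕ // ∑ i, T i = j} {σ : Fin n → ℕ // ∑ i, σ i = k} K :=
  Matrix.of fun T σ => (mult T.1 σ.1 : K)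

theorem linearIndependent_multMatrix_row (K : Type*) [Field K] [CharZero K] {n : ℕ} (hn : 1 ≤ n)
    (d : ℕ) : LinearIndependent K (multMatrix K n d (d + 1)).row := by
  classical
  rw [Fintype.linearIndependent_iff]
  intro g hg
  by_contra! hne
  let i₀ : Fin n := ⟨0, hn⟩
  obtain ⟨T₀, hT₀, hmax⟩ := (univ.filter fun T => g T ≠ 0).exists_max_image (fun T => T.1 i₀)
    (by obtain ⟨T, hT⟩ := hne; exact ⟨T, by simpa using hT⟩)
  simp only [mem_filter, mem_univ, true_and] at hT₀ hmax
  let σ₀ : {σ : Fin n → ℕ // ∑ i, σ i = d + 1} :=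
    ⟨update T₀.1 i₀ (T₀.1 i₀ + 1), by rw [sum_update_succ, T₀.2]⟩
  have hdiag : mult T₀.1 σ₀.1 ≠ 0 := mult_ne_zero_iff.mpr (le_update_self_iff.mpr (Nat.le_succ _))
  have hoff (T) (hT : T ≠ T₀) : g T * (mult T.1 σ₀.1 : K) = 0 := by
    by_cases hgT : g T = 0
    · rw [hgT, zero_mul]
    · rw [Nat.cast_eq_zero.mpr (not_ne_iff.mp fun h => hT (Subtype.ext
        (eq_of_le_update_succ (mult_ne_zero_iff.mp h) (hmax T hgT) (by rw [T.2, T₀.2])))),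
        mul_zero]
  have hσ₀ := congrFun hg σ₀
  simp only [Finset.sum_apply, Pi.smul_apply, smul_eq_mul, Pi.zero_apply, Matrix.row,
    multMatrix, Matrix.of_apply] at hσ₀
  rw [sum_eq_single T₀ (fun T _ hT => hoff T hT) (by simp)] at hσ₀
  exact (mul_ne_zero hT₀ (Nat.cast_ne_zero.mpr hdiag)) hσ₀

theorem LinearIndependent.finrank_ker_mulVecLin {m n K : Type*} [Field K] [Fintype m] [Fintype n]
    {A : Matrix m n K} (h : LinearIndependent K A.row) :
    Module.finrank K (LinearMap.ker A.mulVecLin) = Fintype.card n - Fintype.card m := by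
  have := A.mulVecLin.finrank_range_add_finrank_ker
  rw [Module.finrank_fintype_fun_eq_card] at this
  rw [← h.rank_matrix, Matrix.rank]
  omega

lemma Function.extend_val_comp_of_eq_zero {α β : Type*} [Zero β] {p : α → Prop} {u : α → β}
    (hu : ∀ a, ¬p a → u a = 0) : extend (Subtype.val : Subtype p → α) (u ∘ Subtype.val) 0 = u := by
  funext a
  by_cases ha : p a
  · exact Subtype.val_injective.extend_apply _ _ ⟨a, ha⟩
  · rw [extend_apply' _ _ _ fun ⟨b, hb⟩ => ha (hb ▸ b.2), hu a ha, Pi.zero_apply]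

section BalancingSpace

variable (K : Type*) [Field K] (n d : ℕ)

lemma mem_balancingSpace_iff [CharZero K] {u : (Fin n → ℕ) → K} :
    u ∈ balancingSpace K n d ↔ (∀ σ ∉ completeComplex n d, u σ = 0) ∧
      ∀ T : Fin n → ℕ, ∑ i, T i = d → ∑ σ ∈ completeComplex n d, (mult T σ : K) * u σ = 0 := by
  simp only [balancingSpace, Submodule.mem_inf, Submodule.mem_iInf, LinearMap.mem_ker,
    LinearMap.proj_apply, Subtype.forall, LinearMap.coe_sum, Finset.sum_apply,
    LinearMap.smul_apply, smul_eq_mul]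
  refine and_congr_right fun _ => ⟨fun h T hT => h T hT.le, fun h T hT => ?_⟩
  exact sum_mult_mul_eq_zero_of_card_le _ (fun σ => mem_completeComplex.mp) d.le_succ u h T hT

local notation "extendFacets" => Function.ExtendByZero.linearMap K
  (Subtype.val : {σ : Fin n → ℕ // ∑ i, σ i = d + 1} → Fin n → ℕ)

lemma apply_eq_zero_of_mem_balancingSpace {u : (Fin n → ℕ) → K} (hu : u ∈ balancingSpace K n d)
    {σ : Fin n → ℕ} (hσ : σ ∉ completeComplex n d) : u σ = 0 :=
  (Submodule.mem_iInf _).mp (Submodule.mem_inf.mp hu).1 ⟨σ, hσ⟩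

lemma balancingSpace_le_range_extendByZero :
    balancingSpace K n d ≤ LinearMap.range extendFacets := fun u hu =>
  ⟨u ∘ Subtype.val, extend_val_comp_of_eq_zero fun _ hσ =>
    apply_eq_zero_of_mem_balancingSpace K n d hu (mt mem_completeComplex.mp hσ)⟩

lemma comap_extendByZero_balancingSpace [CharZero K] :
    (balancingSpace K n d).comap extendFacets
      = LinearMap.ker (multMatrix K n d (d + 1)).mulVecLin := by
  ext w
  have hsupp (σ) (hσ : σ ∉ completeComplex n d) : extendFacets w σ = 0 :=
    extend_apply' _ _ _ fun ⟨τ, hτ⟩ => hσ (hτ ▸ mem_completeComplex.mpr τ.2)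
  have hsum (T : Fin n → ℕ) : ∑ σ ∈ completeComplex n d, (mult T σ : K) * extendFacets w σ
      = ∑ σ : {σ : Fin n → ℕ // ∑ i, σ i = d + 1}, (mult T σ.1 : K) * w σ := by
    rw [sum_subtype _ fun _ => mem_completeComplex]
    exact sum_congr rfl fun σ _ => by
      rw [ExtendByZero.linearMap_apply, Subtype.val_injective.extend_apply]
  simp only [Submodule.mem_comap, mem_balancingSpace_iff, hsum, LinearMap.mem_ker, funext_iff,
    Matrix.mulVecLin_apply, Matrix.mulVec, dotProduct, multMatrix, Matrix.of_apply,
    Pi.zero_apply, Subtype.forall]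
  exact ⟨fun h => h.2, fun h => ⟨hsupp, h⟩⟩

lemma finrank_balancingSpace [CharZero K] :
    Module.finrank K (balancingSpace K n d)
      = Module.finrank K (LinearMap.ker (multMatrix K n d (d + 1)).mulVecLin) := by
  have hinj : Injective extendFacets :=
    extend_injective Subtype.val_injective (0 : (Fin n → ℕ) → K)
  rw [← comap_extendByZero_balancingSpace, (Submodule.equivMapOfInjective _ hinj _).finrank_eq,
    Submodule.map_comap_eq_self (balancingSpace_le_range_extendByZero K n d)]

end BalancingSpace

/-- Over a characteristic-zero field, the rows of the multiplicity matrix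
`M(Δ_{n,d}, Δ_{n,d−1})` (indexed by multisets `T` of cardinality `d`, with entries
`m(T ⊆ σ)` for simplices `σ` of cardinality `d+1`) are linearly independent, and
consequently the space of balancings of the complete `d`-complex `Δ_{n,d}` on `n`
vertices has dimension `C(n+d−1, d+1)`. -/
theorem complete_complex_balancings (K : Type*) [Field K] [CharZero K]
    (n d : ℕ) (hn : 1 ≤ n) :
    LinearIndependent K
      (fun T : {T : Fin n → ℕ // ∑ i, T i = d} =>
        (fun σ : {σ : Fin n → ℕ // ∑ i, σ i = d + 1} => (mult T.1 σ.1 : K)))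
    ∧ Module.finrank K (balancingSpace K n d) = (n + d - 1).choose (d + 1) := by
  have hrows := linearIndependent_multMatrix_row K hn d
  refine ⟨hrows, ?_⟩
  rw [finrank_balancingSpace, hrows.finrank_ker_mulVecLin, card_subtype_sum_eq,
    card_subtype_sum_eq]
  obtain ⟨m, rfl⟩ := Nat.exists_eq_add_of_le' hn
  rw [show m + 1 + (d + 1) - 1 = m + d + 1 by omega, show m + 1 + d - 1 = m + d by omega,
    Nat.choose_succ_succ', Nat.add_sub_cancel_left]
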